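/- arXiv:1904.11107 — 6 statements merged into one kernel-verified Lean document; each statement's English description precedes it below -/
import Mathlib

section
/- Let Q, Q̃, Φ be complex matrices of sizes k×n, n×k, k×k respectively, let r be a nonzero real number, and suppose that QQ† − Q̃†Q̃ + [Φ, Φ†] + r·1ₖ = 0, Q̃Φ^ℓ = 0, and Φ^ℓ Q = 0 (where † denotes conjugate transpose and ℓ ≥ 1). Then Φ^ℓ = 0. -/
/-!
Put `S = Φ ^ ℓ`, which commutes with `Φ`, and let `μ` be the left-hand side of the moment map
equation. The traces of `S† μ S` and `S μ S†` vanish, and expanding them gives two linear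
relations between the squared Frobenius norms of `Q† S`, `Q̃ S†`, `Φ† S`, `S Φ†`, `Φ S` and `S`.
Their difference reads `‖Q† S‖² + ‖Q̃ S†‖² + ‖Φ† S - S Φ†‖² = 0`; with these three terms gone,
their sum reads `2 r ‖S‖² = 0`.
-/

open Matrix

open scoped ComplexOrder

namespace Matrix

variable {𝕜 : Type*} [RCLike 𝕜] {m n p : Type*} [Fintype m] [Fintype n] [Fintype p]

lemma trace_conjTranspose_mul_sub_self (A B : Matrix m n 𝕜) :
    ((A - B)ᴴ * (A - B)).trace =
      (Aᴴ * A).trace + (Bᴴ * B).trace - (Aᴴ * B).trace - (Bᴴ * A).trace := by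
  simp only [conjTranspose_sub, Matrix.sub_mul, Matrix.mul_sub, trace_sub]
  ring

lemma trace_conjTranspose_mul_self_nonneg (A : Matrix m n 𝕜) : 0 ≤ (Aᴴ * A).trace :=
  (posSemidef_conjTranspose_mul_self A).trace_nonneg

lemma trace_conjTranspose_mul_self_commutator_of_commute {Φ S : Matrix m m 𝕜}
    (h : Commute Φ S) :
    ((Φᴴ * S - S * Φᴴ)ᴴ * (Φᴴ * S - S * Φᴴ)).trace =
      ((Φᴴ * S)ᴴ * (Φᴴ * S)).trace + ((S * Φᴴ)ᴴ * (S * Φᴴ)).trace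
        - 2 * ((Φ * S)ᴴ * (Φ * S)).trace := by
  have e₁ : ((Φᴴ * S)ᴴ * (S * Φᴴ)).trace = ((Φ * S)ᴴ * (Φ * S)).trace :=
    calc _ = (Sᴴ * (Φ * S) * Φᴴ).trace := by
          simp only [conjTranspose_mul, conjTranspose_conjTranspose, Matrix.mul_assoc]
      _ = ((S * Φ)ᴴ * (S * Φ)).trace := by
          rw [h.eq, trace_mul_comm, conjTranspose_mul]; simp only [Matrix.mul_assoc]
      _ = _ := by rw [h.eq]
  have e₂ : ((S * Φᴴ)ᴴ * (Φᴴ * S)).trace = ((Φ * S)ᴴ * (Φ * S)).trace :=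
    calc _ = (Φ * (Sᴴ * Φᴴ * S)).trace := by
          simp only [conjTranspose_mul, conjTranspose_conjTranspose, Matrix.mul_assoc]
      _ = (Sᴴ * Φᴴ * (S * Φ)).trace := by
          rw [trace_mul_comm, Matrix.mul_assoc _ S Φ]
      _ = _ := by rw [← h.eq, conjTranspose_mul, Matrix.mul_assoc]
  rw [trace_conjTranspose_mul_sub_self, e₁, e₂]
  ring

lemma trace_conjTranspose_mul_self_conjTranspose (A : Matrix m n 𝕜) :
    (Aᴴᴴ * Aᴴ).trace = (Aᴴ * A).trace := by
  rw [conjTranspose_conjTranspose, trace_mul_comm]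

variable [DecidableEq m]

lemma trace_conjTranspose_mul_moment_mul (Q : Matrix m n 𝕜) (Qt : Matrix n m 𝕜)
    (Φ : Matrix m m 𝕜) (c : 𝕜) (X : Matrix m p 𝕜) :
    (Xᴴ * (Q * Qᴴ - Qtᴴ * Qt + (Φ * Φᴴ - Φᴴ * Φ) + c • 1) * X).trace =
      ((Qᴴ * X)ᴴ * (Qᴴ * X)).trace - ((Qt * X)ᴴ * (Qt * X)).trace
        + ((Φᴴ * X)ᴴ * (Φᴴ * X)).trace - ((Φ * X)ᴴ * (Φ * X)).trace + c * (Xᴴ * X).trace := by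
  simp only [conjTranspose_mul, conjTranspose_conjTranspose, Matrix.mul_add, Matrix.add_mul,
    Matrix.mul_sub, Matrix.sub_mul, Matrix.mul_smul, Matrix.smul_mul, Matrix.mul_one,
    Matrix.mul_assoc, trace_add, trace_sub, trace_smul, smul_eq_mul]
  ring

lemma trace_mul_moment_mul_conjTranspose (Q : Matrix m n 𝕜) (Qt : Matrix n m 𝕜)
    (Φ : Matrix m m 𝕜) (c : 𝕜) (X : Matrix p m 𝕜) :
    (X * (Q * Qᴴ - Qtᴴ * Qt + (Φ * Φᴴ - Φᴴ * Φ) + c • 1) * Xᴴ).trace =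
      ((X * Q)ᴴ * (X * Q)).trace - ((Qt * Xᴴ)ᴴ * (Qt * Xᴴ)).trace
        + ((X * Φ)ᴴ * (X * Φ)).trace - ((X * Φᴴ)ᴴ * (X * Φᴴ)).trace + c * (Xᴴ * X).trace := by
  have hΦ : Φ * Xᴴ = (X * Φᴴ)ᴴ := by rw [conjTranspose_mul, conjTranspose_conjTranspose]
  have := trace_conjTranspose_mul_moment_mul Q Qt Φ c Xᴴ
  rw [conjTranspose_conjTranspose X, ← conjTranspose_mul X Q, ← conjTranspose_mul X Φ, hΦ,
    trace_mul_comm X Xᴴ] at this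
  simpa only [trace_conjTranspose_mul_self_conjTranspose] using this

theorem eq_zero_of_moment_map_eq_zero {Q : Matrix m n 𝕜} {Qt : Matrix n m 𝕜}
    {Φ S : Matrix m m 𝕜} {c : 𝕜} (hc : c ≠ 0)
    (hμ : Q * Qᴴ - Qtᴴ * Qt + (Φ * Φᴴ - Φᴴ * Φ) + c • 1 = 0)
    (hΦS : Commute Φ S) (hQtS : Qt * S = 0) (hSQ : S * Q = 0) : S = 0 := by
  have h₁ := trace_conjTranspose_mul_moment_mul Q Qt Φ c S
  have h₂ := trace_mul_moment_mul_conjTranspose Q Qt Φ c S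
  rw [hμ, Matrix.mul_zero, Matrix.zero_mul, trace_zero] at h₁ h₂
  rw [hQtS] at h₁
  rw [hSQ, ← hΦS.eq] at h₂
  simp only [conjTranspose_zero, Matrix.mul_zero, trace_zero, sub_zero, zero_sub] at h₁ h₂
  have hsum : ((Qᴴ * S)ᴴ * (Qᴴ * S)).trace + ((Qt * Sᴴ)ᴴ * (Qt * Sᴴ)).trace
      + ((Φᴴ * S - S * Φᴴ)ᴴ * (Φᴴ * S - S * Φᴴ)).trace = 0 := by
    rw [trace_conjTranspose_mul_self_commutator_of_commute hΦS]
    linear_combination h₂ - h₁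
  obtain ⟨hab, hd⟩ := (add_eq_zero_iff_of_nonneg
    (add_nonneg (trace_conjTranspose_mul_self_nonneg _) (trace_conjTranspose_mul_self_nonneg _))
    (trace_conjTranspose_mul_self_nonneg _)).mp hsum
  obtain ⟨ha, hb⟩ := (add_eq_zero_iff_of_nonneg
    (trace_conjTranspose_mul_self_nonneg _) (trace_conjTranspose_mul_self_nonneg _)).mp hab
  have hadj : Φᴴ * S = S * Φᴴ := sub_eq_zero.mp (trace_conjTranspose_mul_self_eq_zero_iff.mp hd)
  rw [hadj] at h₁
  refine trace_conjTranspose_mul_self_eq_zero_iff.mp ?_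
  have h2c : (2 * c) * (Sᴴ * S).trace = 0 := by linear_combination -h₁ - h₂ - ha + hb
  exact (mul_eq_zero.mp h2c).resolve_left (mul_ne_zero two_ne_zero hc)

end Matrix

theorem stmt_0_general (k n ℓ : ℕ)
    (Q : Matrix (Fin k) (Fin n) ℂ) (Qt : Matrix (Fin n) (Fin k) ℂ)
    (Φ : Matrix (Fin k) (Fin k) ℂ) (r : ℝ) (hr : r ≠ 0)
    (hmm : Q * Qᴴ - Qtᴴ * Qt + (Φ * Φᴴ - Φᴴ * Φ) + (r : ℂ) • (1 : Matrix (Fin k) (Fin k) ℂ) = 0)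
    (h1 : Qt * Φ ^ ℓ = 0) (h2 : Φ ^ ℓ * Q = 0) :
    Φ ^ ℓ = 0 :=
  eq_zero_of_moment_map_eq_zero (Complex.ofReal_ne_zero.mpr hr) hmm (Commute.self_pow Φ ℓ) h1 h2

theorem stmt_0 (k n ℓ : ℕ) (hℓ : 1 ≤ ℓ)
    (Q : Matrix (Fin k) (Fin n) ℂ) (Qt : Matrix (Fin n) (Fin k) ℂ)
    (Φ : Matrix (Fin k) (Fin k) ℂ) (r : ℝ) (hr : r ≠ 0)
    (hmm : Q * Qᴴ - Qtᴴ * Qt + (Φ * Φᴴ - Φᴴ * Φ) + (r : ℂ) • (1 : Matrix (Fin k) (Fin k) ℂ) = 0)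
    (h1 : Qt * Φ ^ ℓ = 0) (h2 : Φ ^ ℓ * Q = 0) :
    Φ ^ ℓ = 0 :=
  stmt_0_general k n ℓ Q Qt Φ r hr hmm h1 h2
end

section
/- Let Φ and Φ† be k×k complex matrices († denoting conjugate transpose) and ℓ ≥ 1. Then tr([Φ^ℓ, (Φ†)^ℓ][Φ, Φ†]) = tr([Φ, (Φ†)^ℓ][Φ^ℓ, Φ†]). -/
open Matrix

/-
Write both sides with ring commutators. Invariance of the trace form, `tr(⁅X, Y⁆ Z) = tr(X ⁅Y, Z⁆)`,
moves everything onto the last factor `Φᴴ`: the two sides become `tr(⁅⁅Φ^ℓ, Φᴴ^ℓ⁆, Φ⁆ Φᴴ)` and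
`tr(⁅⁅Φ, Φᴴ^ℓ⁆, Φ^ℓ⁆ Φᴴ)`, and the two double commutators agree by the Jacobi identity because
`Φ` commutes with `Φ^ℓ`.
-/

theorem Commute.lie_lie_eq_lie_lie {A : Type*} [Ring A] {a p : A} (h : Commute a p) (q : A) :
    ⁅⁅p, q⁆, a⁆ = ⁅⁅a, q⁆, p⁆ := by
  simp only [Ring.lie_def, sub_mul, mul_sub, mul_assoc, h.eq, h.left_comm q]
  abel

theorem Matrix.trace_lie_mul {n R : Type*} [Fintype n] [CommRing R] (X Y Z : Matrix n n R) :
    trace (⁅X, Y⁆ * Z) = trace (X * ⁅Y, Z⁆) := by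
  simp only [Ring.lie_def, sub_mul, mul_sub, trace_sub, Matrix.mul_assoc]
  rw [trace_mul_comm Y, Matrix.mul_assoc]

theorem Matrix.trace_lie_mul_lie_of_commute {n R : Type*} [Fintype n] [DecidableEq n] [CommRing R]
    {A P : Matrix n n R} (h : Commute A P) (B Q : Matrix n n R) :
    trace (⁅P, Q⁆ * ⁅A, B⁆) = trace (⁅A, Q⁆ * ⁅P, B⁆) := by
  rw [← trace_lie_mul, ← trace_lie_mul, h.lie_lie_eq_lie_lie]

theorem stmt_2_general (k ℓ : ℕ) (Φ : Matrix (Fin k) (Fin k) ℂ) :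
    ((Φ ^ ℓ * (Φᴴ) ^ ℓ - (Φᴴ) ^ ℓ * Φ ^ ℓ) * (Φ * Φᴴ - Φᴴ * Φ)).trace
      = ((Φ * (Φᴴ) ^ ℓ - (Φᴴ) ^ ℓ * Φ) * (Φ ^ ℓ * Φᴴ - Φᴴ * Φ ^ ℓ)).trace := by
  simpa only [Ring.lie_def] using
    trace_lie_mul_lie_of_commute (Commute.self_pow Φ ℓ) Φᴴ (Φᴴ ^ ℓ)

theorem stmt_2 (k ℓ : ℕ) (hℓ : 1 ≤ ℓ) (Φ : Matrix (Fin k) (Fin k) ℂ) :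
    ((Φ ^ ℓ * (Φᴴ) ^ ℓ - (Φᴴ) ^ ℓ * Φ ^ ℓ) * (Φ * Φᴴ - Φᴴ * Φ)).trace
      = ((Φ * (Φᴴ) ^ ℓ - (Φᴴ) ^ ℓ * Φ) * (Φ ^ ℓ * Φᴴ - Φᴴ * Φ ^ ℓ)).trace :=
  stmt_2_general k ℓ Φ
end

section
/- Let Q ∈ Hom(ℂⁿ, ℂᵏ), Q̃ ∈ Hom(ℂᵏ, ℂⁿ), Φ ∈ End(ℂᵏ), ℓ ≥ 1, with Φ^ℓ = 0 and Σ_{i=0}^{ℓ−1} Φ^i QQ̃ Φ^{ℓ−1−i} = 0. Define u_m = Q̃Φ^m Q for m ≥ 0. Then for every j with 1 ≤ j ≤ ℓ, one has Σ_{i=1}^{j} u_{ℓ−i} · u_{ℓ−(j+1−i)} = 0. -/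
/-!
Multiply `∑ i < ℓ, Φ^i (Q Q̃) Φ^(ℓ-1-i) = 0` on the right by `Φ^(ℓ-j)`: since `Φ^ℓ = 0`, the
term with index `i` dies when `i < ℓ - j`, so the `j` terms with `ℓ - j ≤ i < ℓ` sum to zero. Sandwiching what is left between `Q̃`
and `Q` turns each term `Φ^a (Q Q̃) Φ^b` into `u_a u_b`, which is the claimed relation.
-/

open Matrix

theorem sum_Icc_pow_mul_mul_pow_eq_zero {R : Type*} [Semiring R] {x p : R} {ℓ j : ℕ}
    (hx : x ^ ℓ = 0) (h : ∑ i ∈ Finset.range ℓ, x ^ i * p * x ^ (ℓ - 1 - i) = 0)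
    (hj : j ≤ ℓ) :
    ∑ i ∈ Finset.Icc 1 j, x ^ (ℓ - i) * p * x ^ (ℓ - (j + 1 - i)) = 0 := by
  have hvanish : ∀ i ∈ Finset.range ℓ, i ∉ Finset.range j →
      x ^ (ℓ - 1 - i) * p * x ^ i * x ^ (ℓ - j) = 0 := by
    intro i _ hij
    have hle : ℓ ≤ i + (ℓ - j) := by simp only [Finset.mem_range] at hij; omega
    rw [mul_assoc _ (x ^ i), ← pow_add, pow_eq_zero_of_le hle hx, mul_zero]
  calc ∑ i ∈ Finset.Icc 1 j, x ^ (ℓ - i) * p * x ^ (ℓ - (j + 1 - i))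
      = ∑ i ∈ Finset.range j, x ^ (ℓ - 1 - i) * p * x ^ i * x ^ (ℓ - j) := by
        rw [← Finset.Ico_add_one_right_eq_Icc, Finset.sum_Ico_eq_sum_range, Nat.add_sub_cancel]
        refine Finset.sum_congr rfl fun i hi => ?_
        have hi : i < j := Finset.mem_range.1 hi
        rw [mul_assoc _ (x ^ i), ← pow_add]
        congr 3 <;> omega
    _ = ∑ i ∈ Finset.range ℓ, x ^ (ℓ - 1 - i) * p * x ^ i * x ^ (ℓ - j) :=
        Finset.sum_subset (Finset.range_subset_range.2 hj) hvanish
    _ = (∑ i ∈ Finset.range ℓ, x ^ i * p * x ^ (ℓ - 1 - i)) * x ^ (ℓ - j) := by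
        rw [Finset.sum_mul, ← Finset.sum_range_reflect]
        refine Finset.sum_congr rfl fun i hi => ?_
        have hi : i < ℓ := Finset.mem_range.1 hi
        rw [Nat.sub_sub_self (by omega : i ≤ ℓ - 1)]
    _ = 0 := by rw [h, zero_mul]

theorem stmt_10_general (k n ℓ : ℕ)
    (Q : Matrix (Fin k) (Fin n) ℂ) (Qt : Matrix (Fin n) (Fin k) ℂ)
    (Φ : Matrix (Fin k) (Fin k) ℂ)
    (hnil : Φ ^ ℓ = 0)
    (hmm : ∑ i ∈ Finset.range ℓ, Φ ^ i * (Q * Qt) * Φ ^ (ℓ - 1 - i) = 0)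
    (u : ℕ → Matrix (Fin n) (Fin n) ℂ) (hu : ∀ m, u m = Qt * Φ ^ m * Q) :
    ∀ j, 1 ≤ j → j ≤ ℓ →
      ∑ i ∈ Finset.Icc 1 j, u (ℓ - i) * u (ℓ - (j + 1 - i)) = 0 := by
  intro j _ hj
  have hsandwich : ∀ a b, u a * u b = Qt * (Φ ^ a * (Q * Qt) * Φ ^ b) * Q := by
    intro a b
    simp only [hu, Matrix.mul_assoc]
  simp only [hsandwich]
  rw [← Matrix.sum_mul, ← Matrix.mul_sum, sum_Icc_pow_mul_mul_pow_eq_zero hnil hmm hj,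
    Matrix.mul_zero, Matrix.zero_mul]

theorem stmt_10 (k n ℓ : ℕ) (hℓ : 1 ≤ ℓ)
    (Q : Matrix (Fin k) (Fin n) ℂ) (Qt : Matrix (Fin n) (Fin k) ℂ)
    (Φ : Matrix (Fin k) (Fin k) ℂ)
    (hnil : Φ ^ ℓ = 0)
    (hmm : ∑ i ∈ Finset.range ℓ, Φ ^ i * (Q * Qt) * Φ ^ (ℓ - 1 - i) = 0)
    (u : ℕ → Matrix (Fin n) (Fin n) ℂ) (hu : ∀ m, u m = Qt * Φ ^ m * Q) :
    ∀ j, 1 ≤ j → j ≤ ℓ →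
      ∑ i ∈ Finset.Icc 1 j, u (ℓ - i) * u (ℓ - (j + 1 - i)) = 0 :=
  stmt_10_general k n ℓ Q Qt Φ hnil hmm u hu
end

section
/- Fix k ≥ 0 and work over the field ℚ(z, φ, ε). For 0 ≤ j ≤ j' ≤ k, define S_{jj'} = C(j',j)·∏_{r=j}^{j'-1}(rφ+ε) / [∏_{r=0}^{k-j-1}(rφ+ε+z) · ∏_{r=k-2j+1}^{k-j}(rφ+z) · ∏_{r=2j-k+1}^{j'-k+j}(rφ−z)] and (S⁻¹)_{ij} = C(j,i)·∏_{r=i}^{j-1}(rφ+ε)·∏_{r=0}^{k-j-1}(rφ+ε+z)·∏_{r=k+1-j-i}^{k-j}(rφ+z), with both matrices upper triangular (entries zero when the first index exceeds the second) and with empty products equal to 1 (products ∏_{r=a}^{b} are empty when a > b). Then the matrix product satisfies Σ_{j} (S⁻¹)_{ij} S_{jj'} = δ_{ij'} for all 0 ≤ i, j' ≤ k. -/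
noncomputable section

/-- The field ℚ(z, φ, ε). -/
abbrev K14 : Type := FractionRing (MvPolynomial (Fin 3) ℚ)

noncomputable def z14 : K14 := algebraMap (MvPolynomial (Fin 3) ℚ) K14 (MvPolynomial.X 0)
noncomputable def φ14 : K14 := algebraMap (MvPolynomial (Fin 3) ℚ) K14 (MvPolynomial.X 1)
noncomputable def ε14 : K14 := algebraMap (MvPolynomial (Fin 3) ℚ) K14 (MvPolynomial.X 2)

/-- Product `∏_{r=a}^{b} f(r)` over integers (empty when `a > b`). -/
noncomputable def P14 (a b : ℤ) (f : ℤ → K14) : K14 := ∏ r ∈ Finset.Icc a b, f r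

/-- The (upper triangular) matrix `S` of restrictions of stable classes to
fixed points for `M₁(k,2,k)`. -/
noncomputable def S14 (k : ℕ) (j j' : Fin (k + 1)) : K14 :=
  if (j : ℕ) ≤ (j' : ℕ) then
    (Nat.choose j' j : K14) * P14 (j : ℤ) ((j' : ℤ) - 1) (fun r => r * φ14 + ε14)
      / (P14 0 ((k : ℤ) - (j : ℤ) - 1) (fun r => r * φ14 + ε14 + z14)
          * P14 ((k : ℤ) - 2 * (j : ℤ) + 1) ((k : ℤ) - (j : ℤ)) (fun r => r * φ14 + z14)
          * P14 (2 * (j : ℤ) - (k : ℤ) + 1) ((j' : ℤ) - (k : ℤ) + (j : ℤ))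
              (fun r => r * φ14 - z14))
  else 0

/-- The claimed inverse matrix `S⁻¹`. -/
noncomputable def Sinv14 (k : ℕ) (i j : Fin (k + 1)) : K14 :=
  if (i : ℕ) ≤ (j : ℕ) then
    (Nat.choose j i : K14) * P14 (i : ℤ) ((j : ℤ) - 1) (fun r => r * φ14 + ε14)
      * P14 0 ((k : ℤ) - (j : ℤ) - 1) (fun r => r * φ14 + ε14 + z14)
      * P14 ((k : ℤ) + 1 - (j : ℤ) - (i : ℤ)) ((k : ℤ) - (j : ℤ)) (fun r => r * φ14 + z14)
  else 0

/-!
For `i ≤ j = i + m ≤ j' = i + n`, the `(ε + z)`-factors and most of the `z`-factors of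
`S⁻¹_{ij}` and `S_{jj'}` cancel, the `ε`-factors merge into `∏_{r=i}^{j'-1} (rφ + ε)`, and with
`g t = (2i - k + t)φ - z` the product becomes
`C(j', i) ∏_{r=i}^{j'-1} (rφ + ε) · (-1)^m C(n, m) g(2m) / ∏_{t=m}^{m+n} g(t)`.
For `n = 0` this is `1`. For `n ≥ 1` the sum over `m` telescopes: with
`H_m = (-1)^m C(n-1, m) / ∏_{t=m+1}^{m+n} g(t)`, Pascal's rule and `n C(n-1, m) = (m+1) C(n, m+1)`
make the `(m+1)`-st term equal to `H_{m+1} - H_m`, the `0`-th term is `H_0`, and `H_n = 0`.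
-/

open Finset

section Telescoping

variable {F : Type*} [Field F] (u d : F)

theorem choose_succ_mul_eq_add (n m : ℕ) :
    ((n + 1).choose (m + 1) : F) * (u + (2 * m + 2) * d)
      = n.choose (m + 1) * (u + (m + 1) * d) + n.choose m * (u + (m + n + 2) * d) := by
  have hpascal : ((n + 1).choose (m + 1) : F) = n.choose m + n.choose (m + 1) := by
    rw [Nat.choose_succ_succ', Nat.cast_add]
  have habsorb : ((n : F) + 1) * n.choose m = (n + 1).choose (m + 1) * (m + 1) := by
    simpa using congrArg (Nat.cast : ℕ → F) (Nat.add_one_mul_choose_eq n m)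
  rw [hpascal] at habsorb ⊢
  linear_combination -d * habsorb

theorem sum_range_neg_one_pow_mul_choose_div_prod_eq_zero (hne : ∀ t : ℕ, u + t * d ≠ 0) (n : ℕ) :
    ∑ m ∈ range (n + 2), (-1) ^ m * ((n + 1).choose m : F) * (u + 2 * m * d)
      / ∏ t ∈ range (n + 2), (u + (m + t) * d) = 0 := by
  set H : ℕ → F := fun m => (-1) ^ m * n.choose m / ∏ t ∈ range (n + 1), (u + (m + 1 + t) * d)
  have hstep : ∀ m : ℕ, (-1) ^ (m + 1) * ((n + 1).choose (m + 1) : F) * (u + 2 * (m + 1 : ℕ) * d)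
      / ∏ t ∈ range (n + 2), (u + ((m + 1 : ℕ) + t) * d) = H (m + 1) - H m := by
    intro m
    set P := ∏ t ∈ range n, (u + (m + 2 + t) * d)
    have hfirst : ∏ t ∈ range (n + 1), (u + (m + 1 + t) * d) = (u + (m + 1) * d) * P := by
      rw [prod_range_succ', mul_comm]
      congr 1
      · ring
      · exact prod_congr rfl fun t _ => by push_cast; ring
    have hlast :
        ∏ t ∈ range (n + 1), (u + ((m + 1 : ℕ) + 1 + t) * d) = P * (u + (m + n + 2) * d) := by
      rw [prod_range_succ]
      congr 1
      · exact prod_congr rfl fun t _ => by push_cast; ring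
      · push_cast; ring
    have hall : ∏ t ∈ range (n + 2), (u + ((m + 1 : ℕ) + t) * d)
        = (u + (m + 1) * d) * P * (u + (m + n + 2) * d) := by
      rw [prod_range_succ]
      push_cast
      rw [hfirst]
      ring
    have hP : P ≠ 0 := prod_ne_zero_iff.2 fun t _ => by exact_mod_cast hne (m + 2 + t)
    have hp : u + d * (m + 1) ≠ 0 := by simpa [mul_comm] using hne (m + 1)
    have hq : u + d * (m + n + 2) ≠ 0 := by simpa [mul_comm] using hne (m + n + 2)
    simp only [H, hfirst, hlast, hall]
    have key := choose_succ_mul_eq_add u d n m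
    field_simp
    push_cast
    linear_combination (-1) ^ (m + 1) * key
  have hu : u ≠ 0 := by simpa using hne 0
  rw [sum_range_succ', sum_congr rfl fun m _ => hstep m, sum_range_sub, prod_range_succ']
  -- `H (n + 1) = 0`, and the `m = 0` term is `H 0`
  simp [H, field, add_comm]

end Telescoping

theorem Fin.sum_univ_eq_sum_range_of_support {M : Type*} [AddCommMonoid M] {N : ℕ} [NeZero N]
    {f : Fin N → M} {a n : ℕ} (hN : a + n < N)
    (hf : ∀ j : Fin N, f j ≠ 0 → a ≤ j ∧ (j : ℕ) ≤ a + n) :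
    ∑ j, f j = ∑ m ∈ range (n + 1), f (Fin.ofNat N (a + m)) := by
  have hval : ∀ m ≤ n, (Fin.ofNat N (a + m) : ℕ) = a + m := fun m hm => by
    rw [Fin.val_ofNat, Nat.mod_eq_of_lt (by omega)]
  refine (sum_of_injOn (fun m => Fin.ofNat N (a + m)) ?_ (fun _ _ => mem_univ _) ?_
    fun _ _ => rfl).symm
  · intro x hx y hy hxy
    simp only [coe_range, Set.mem_Iio] at hx hy
    have := congrArg Fin.val hxy
    simp only [hval x (by omega), hval y (by omega)] at this
    omega
  · intro j _ hj
    by_contra hfj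
    obtain ⟨haj, hjn⟩ := hf j hfj
    refine hj ⟨(j : ℕ) - a, by simp; omega, Fin.ext ?_⟩
    rw [hval _ (by omega)]
    omega

open MvPolynomial in
theorem intCast_mul_φ14_add_mul_ε14_add_mul_z14_ne_zero (r a b : ℤ) (hb : b ≠ 0) :
    (r : K14) * φ14 + a * ε14 + b * z14 ≠ 0 := by
  have h : (r : K14) * φ14 + a * ε14 + b * z14
      = algebraMap (MvPolynomial (Fin 3) ℚ) K14
          (C (r : ℚ) * X 1 + C (a : ℚ) * X 2 + C (b : ℚ) * X 0) := by
    simp [φ14, ε14, z14]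
  rw [h, map_ne_zero_iff _ (IsFractionRing.injective _ _)]
  intro hp
  -- evaluate at `z = 1`, `φ = ε = 0`
  simpa [hb] using congrArg (eval (Pi.single 0 1)) hp

theorem intCast_mul_φ14_add_ε14_add_z14_ne_zero (r : ℤ) : (r : K14) * φ14 + ε14 + z14 ≠ 0 := by
  simpa using intCast_mul_φ14_add_mul_ε14_add_mul_z14_ne_zero r 1 1 one_ne_zero

theorem intCast_mul_φ14_add_z14_ne_zero (r : ℤ) : (r : K14) * φ14 + z14 ≠ 0 := by
  simpa using intCast_mul_φ14_add_mul_ε14_add_mul_z14_ne_zero r 0 1 one_ne_zero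

theorem intCast_mul_φ14_sub_z14_ne_zero (r : ℤ) : (r : K14) * φ14 - z14 ≠ 0 := by
  simpa [sub_eq_add_neg] using
    intCast_mul_φ14_add_mul_ε14_add_mul_z14_ne_zero r 0 (-1) (by norm_num)

theorem intCast_mul_φ14_sub_z14_add_ne_zero (c : ℤ) (t : ℕ) :
    (c : K14) * φ14 - z14 + t * φ14 ≠ 0 := by
  simpa [add_sub_right_comm, add_mul] using intCast_mul_φ14_sub_z14_ne_zero (c + t)

theorem P14_eq_prod_range {a b : ℤ} {n : ℕ} (h : b + 1 - a = n) (f : ℤ → K14) :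
    P14 a b f = ∏ t ∈ range n, f (a + t) := by
  rw [P14, Int.Icc_eq_finset_map, prod_map, h, Int.toNat_natCast]
  rfl

theorem P14_mul_P14 {a b c : ℤ} (hab : a ≤ b) (hbc : b ≤ c + 1) (f : ℤ → K14) :
    P14 a (b - 1) f * P14 b c f = P14 a c f := by
  obtain ⟨p, hp⟩ : ∃ p : ℕ, b - a = p := ⟨(b - a).toNat, by omega⟩
  obtain ⟨q, hq⟩ : ∃ q : ℕ, c + 1 - b = q := ⟨(c + 1 - b).toNat, by omega⟩
  rw [P14_eq_prod_range (n := p) (by omega), P14_eq_prod_range hq,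
    P14_eq_prod_range (n := p + q) (by omega), prod_range_add]
  congr 1
  exact prod_congr rfl fun t _ => by congr 1; push_cast; omega

theorem P14_ne_zero (a b : ℤ) {f : ℤ → K14} (hf : ∀ r, f r ≠ 0) : P14 a b f ≠ 0 :=
  prod_ne_zero_iff.2 fun r _ => hf r

theorem P14_mul_P14_mul_eq_neg_one_pow_mul_prod_range {k a m n : ℕ} (hmn : m ≤ n) :
    P14 (k - 2 * (a + m) + 1) (k + 1 - (a + m) - a - 1) (fun r => r * φ14 + z14) *
      P14 (2 * (a + m) - k + 1) (a + n - k + (a + m)) (fun r => r * φ14 - z14) *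
      (((2 * a - k : ℤ) : K14) * φ14 - z14 + 2 * m * φ14) =
    (-1) ^ m * ∏ t ∈ range (n + 1), (((2 * a - k : ℤ) : K14) * φ14 - z14 + (m + t) * φ14) := by
  -- with `g t = (2a - k + t)φ - z`, the factors `rφ + z`, read backwards, are `-g (m + t)`,
  -- and the factors `rφ - z` are `g (2m + 1 + t)`
  set u : K14 := ((2 * a - k : ℤ) : K14) * φ14 - z14
  have hneg := prod_neg (s := range m) fun t => u + (m + t) * φ14
  rw [card_range] at hneg
  have hZ : P14 (k - 2 * (a + m) + 1) (k + 1 - (a + m) - a - 1) (fun r => r * φ14 + z14)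
      = ∏ t ∈ range m, -(u + (m + t) * φ14) := by
    rw [P14_eq_prod_range (n := m) (by ring), ← prod_range_reflect]
    refine prod_congr rfl fun t ht => ?_
    rw [mem_range] at ht
    rw [show m - 1 - t = m - (t + 1) by omega, Nat.cast_sub ht]
    push_cast [u]
    ring
  have hM : P14 (2 * (a + m) - k + 1) (a + n - k + (a + m)) (fun r => r * φ14 - z14)
      = ∏ t ∈ range (n - m), (u + (m + (m + 1 + t : ℕ)) * φ14) := by
    rw [P14_eq_prod_range (n := n - m) (by push_cast [Nat.cast_sub hmn]; ring)]
    refine prod_congr rfl fun t _ => ?_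
    push_cast [u]
    ring
  rw [hZ, hneg, hM, show n + 1 = m + 1 + (n - m) by omega, prod_range_add, prod_range_succ]
  ring

theorem Sinv14_mul_S14 {k m n : ℕ} {i j j' : Fin (k + 1)} (hj : (j : ℕ) = i + m)
    (hj' : (j' : ℕ) = i + n) (hmn : m ≤ n) :
    Sinv14 k i j * S14 k j j' =
      (((i : ℕ) + n).choose i : K14) * P14 i (i + n - 1) (fun r => r * φ14 + ε14) *
        ((-1) ^ m * n.choose m * ((((2 * i - k : ℤ) : K14) * φ14 - z14) + 2 * m * φ14)
          / ∏ t ∈ range (n + 1), ((((2 * i - k : ℤ) : K14) * φ14 - z14) + (m + t) * φ14)) := by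
  have hjk := j'.isLt
  rw [Sinv14, S14, if_pos (by omega), if_pos (by omega), hj, hj']
  generalize (i : ℕ) = a at *
  have hprod := P14_mul_P14_mul_eq_neg_one_pow_mul_prod_range (k := k) (a := a) hmn
  have hchoose :
      ((a + m).choose a : K14) * (a + n).choose (a + m) = (a + n).choose a * n.choose m := by
    have h := Nat.choose_mul (n := a + n) (k := a + m) (s := a) (by omega)
    rw [Nat.add_sub_cancel_left, Nat.add_sub_cancel_left] at h
    rw [mul_comm, ← Nat.cast_mul, h, Nat.cast_mul]
  have hsign : (-1 : K14) ^ m * (-1) ^ m = 1 := by rw [← mul_pow]; norm_num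
  have hA := P14_ne_zero 0 (k - (a + m) - 1) intCast_mul_φ14_add_ε14_add_z14_ne_zero
  have hZ' := P14_ne_zero (k + 1 - (a + m) - a) (k - (a + m)) intCast_mul_φ14_add_z14_ne_zero
  have hZ :=
    P14_ne_zero (k - 2 * (a + m) + 1) (k + 1 - (a + m) - a - 1) intCast_mul_φ14_add_z14_ne_zero
  have hM := P14_ne_zero (2 * (a + m) - k + 1) (a + n - k + (a + m)) intCast_mul_φ14_sub_z14_ne_zero
  have hmid := intCast_mul_φ14_sub_z14_add_ne_zero (2 * a - k) (2 * m)
  have hprod_ne : ∏ t ∈ range (n + 1), (((2 * a - k : ℤ) : K14) * φ14 - z14 + (m + t) * φ14) ≠ 0 :=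
    prod_ne_zero_iff.2 fun t _ => by exact_mod_cast intCast_mul_φ14_sub_z14_add_ne_zero _ (m + t)
  push_cast at *
  rw [← P14_mul_P14 (a := a) (b := a + m) (c := a + n - 1) (by omega) (by omega),
    ← P14_mul_P14 (a := k - 2 * (a + m) + 1) (b := k + 1 - (a + m) - a) (c := k - (a + m))
      (by omega) (by omega)]
  rw [mul_div_assoc', mul_div_assoc', div_eq_div_iff (by simp [*]) (by simp [*])]
  grind

theorem stmt_14 (k : ℕ) (i j' : Fin (k + 1)) :
    ∑ j : Fin (k + 1), Sinv14 k i j * S14 k j j' = if i = j' then 1 else 0 := by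
  have hsupp : ∀ j, Sinv14 k i j * S14 k j j' ≠ 0 → (i : ℕ) ≤ j ∧ (j : ℕ) ≤ j' := by
    intro j hj
    by_contra hc
    rcases not_and_or.1 hc with h | h
    · exact hj (by simp [Sinv14, h])
    · exact hj (by simp [S14, h])
  by_cases hij : (i : ℕ) ≤ j'
  swap
  · rw [sum_eq_zero fun j _ => not_not.1 fun hj => hij ((hsupp j hj).1.trans (hsupp j hj).2),
      if_neg fun h => hij (by rw [h])]
  obtain ⟨n, hn⟩ : ∃ n, (j' : ℕ) = i + n := ⟨j' - i, by omega⟩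
  have hjk := j'.isLt
  rw [Fin.sum_univ_eq_sum_range_of_support (a := i) (n := n) (by omega) fun j hj => hn ▸ hsupp j hj]
  have hval : ∀ m ∈ range (n + 1), (Fin.ofNat (k + 1) (i + m) : ℕ) = i + m := fun m hm => by
    rw [mem_range] at hm
    rw [Fin.val_ofNat, Nat.mod_eq_of_lt (by omega)]
  rw [sum_congr rfl fun m hm =>
      Sinv14_mul_S14 (hval m hm) hn (Nat.lt_succ_iff.1 (mem_range.1 hm)), ← mul_sum]
  cases n with
  | zero =>
    rw [if_pos (Fin.ext (by omega)), P14_eq_prod_range (n := 0) (by ring)]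
    simpa using intCast_mul_φ14_sub_z14_ne_zero (2 * i - k)
  | succ n =>
    rw [sum_range_neg_one_pow_mul_choose_div_prod_eq_zero _ _
      (intCast_mul_φ14_sub_z14_add_ne_zero _) n, mul_zero, if_neg fun h => by rw [h] at hn; omega]

end
end

section
/- Let i ≤ j' and k, n be integers. Define for integer r̃ the term T(r̃) = C(j', j)·C(j, i)·(k − 2j − n)/(r̃!·(j'−i−r̃)!) where j = k − j' + r̃ − n, with the convention that C(a,b) = 0 unless 0 ≤ b ≤ a, and 1/m! = 0 for m < 0. Then Σ_{r̃ ∈ ℤ} T(r̃) = 0. -/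
/-- Binomial coefficient `C(a,b)` for integer arguments, zero unless `0 ≤ b ≤ a`. -/
noncomputable def zchoose (a b : ℤ) : ℚ :=
  if 0 ≤ b ∧ b ≤ a then (Nat.choose a.toNat b.toNat : ℚ) else 0

/-- `1/m!` for integer `m`, zero when `m < 0`. -/
noncomputable def invFact (m : ℤ) : ℚ :=
  if 0 ≤ m then 1 / (Nat.factorial m.toNat : ℚ) else 0

/-!
With `j = k - j' + r - n`, the reflection `r ↦ 2j' - k + n - r` exchanges `r` with `j' - j`
and `j' - i - r` with `j - i`. Writing `C(j', j) C(j, i) = j'!/i! · 1/(j' - j)! · 1/(j - i)!`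
shows that the product of the binomials and inverse factorials is invariant under it, while
`k - 2j - n` changes sign. So the summand is odd about `(2j' - k + n)/2` and the sum vanishes.
-/

theorem finsum_eq_zero_of_map_sub_eq_neg {α R : Type*} [AddCommGroup α] [Ring R]
    [NoZeroDivisors R] [CharZero R] {f : α → R} (c : α) (hf : ∀ r, f (c - r) = -f r) :
    ∑ᶠ r, f r = 0 := by
  rw [← CharZero.eq_neg_self_iff, ← finsum_neg_distrib]
  calc ∑ᶠ r, f r = ∑ᶠ r, f (c - r) := (finsum_comp_equiv (Equiv.subLeft c)).symm
    _ = ∑ᶠ r, -f r := by simp only [hf]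

lemma zchoose_eq_zero {a b : ℤ} (h : ¬(0 ≤ b ∧ b ≤ a)) : zchoose a b = 0 := if_neg h

lemma invFact_of_neg {m : ℤ} (h : m < 0) : invFact m = 0 := if_neg (not_le.mpr h)

lemma zchoose_eq_factorial_div {a b : ℤ} (h : 0 ≤ b ∧ b ≤ a) :
    zchoose a b = a.toNat.factorial / (b.toNat.factorial * (a - b).toNat.factorial) := by
  rw [zchoose, if_pos h, Nat.cast_choose ℚ (by omega),
    show (a - b).toNat = a.toNat - b.toNat by omega]

lemma invFact_of_nonneg {m : ℤ} (h : 0 ≤ m) : invFact m = 1 / m.toNat.factorial := if_pos h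

lemma zchoose_mul_zchoose {a c : ℤ} (b : ℤ) (hc : 0 ≤ c) :
    zchoose a b * zchoose b c =
      a.toNat.factorial / c.toNat.factorial * invFact (a - b) * invFact (b - c) := by
  by_cases hab : 0 ≤ b ∧ b ≤ a
  · by_cases hcb : c ≤ b
    · rw [zchoose_eq_factorial_div hab, zchoose_eq_factorial_div ⟨hc, hcb⟩,
        invFact_of_nonneg (by omega), invFact_of_nonneg (by omega)]
      have := Nat.factorial_ne_zero b.toNat
      field_simp
    · rw [zchoose_eq_zero (a := b) (by omega), invFact_of_neg (m := b - c) (by omega)]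
      simp
  · rw [zchoose_eq_zero hab]
    rcases not_and_or.mp hab with hb | hb
    · rw [invFact_of_neg (m := b - c) (by omega)]; simp
    · rw [invFact_of_neg (m := a - b) (by omega)]; simp

lemma zchoose_mul_zchoose_mul_invFact_mul_invFact_reflect (i j j' r : ℤ) :
    zchoose j' j * zchoose j i * invFact r * invFact (j' - i - r) =
      zchoose j' (j' - r) * zchoose (j' - r) i * invFact (j' - j) * invFact (j - i) := by
  by_cases hi : 0 ≤ i
  · rw [zchoose_mul_zchoose j hi, zchoose_mul_zchoose (j' - r) hi, sub_sub_cancel, sub_right_comm]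
    ring
  · rw [zchoose_eq_zero (a := j) (b := i) (by omega),
      zchoose_eq_zero (a := j' - r) (b := i) (by omega)]
    simp

theorem stmt_15_general (i j' k n : ℤ) :
    ∑ᶠ r : ℤ,
      (zchoose j' (k - j' + r - n) * zchoose (k - j' + r - n) i
        * ((k - 2 * (k - j' + r - n) - n : ℤ) : ℚ)
        * invFact r * invFact (j' - i - r)) = 0 := by
  refine finsum_eq_zero_of_map_sub_eq_neg (2 * j' - k + n) fun r => ?_
  have hsym := zchoose_mul_zchoose_mul_invFact_mul_invFact_reflect i (k - j' + r - n) j' r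
  rw [show k - j' + (2 * j' - k + n - r) - n = j' - r by ring,
    show j' - i - (2 * j' - k + n - r) = k - j' + r - n - i by ring,
    show 2 * j' - k + n - r = j' - (k - j' + r - n) by ring]
  push_cast
  linear_combination (k - 2 * (k - j' + r - n) - n : ℚ) * hsym

theorem stmt_15 (i j' k n : ℤ) (hij : i ≤ j') :
    ∑ᶠ r : ℤ,
      (zchoose j' (k - j' + r - n) * zchoose (k - j' + r - n) i
        * ((k - 2 * (k - j' + r - n) - n : ℤ) : ℚ)
        * invFact r * invFact (j' - i - r)) = 0 :=
  stmt_15_general i j' k n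
end

section
/- Let ℓ ≥ 1, n ≥ 1, k with 0 ≤ k ≤ nℓ, and set k^∨ = nℓ − k. Let Φ ∈ End(ℂᵏ) with Φ^ℓ = 0 and Q̃ ∈ Hom(ℂᵏ, ℂⁿ), and let Ã be the (ℓn)×k matrix with row blocks Q̃, Q̃Φ, …, Q̃Φ^{ℓ−1}; assume rank Ã = k. Let S_n ∈ End(ℂ^{ℓn}) be the block upshift operator sending row block m to row block m−1 (and zero on the first block), so that ÃΦ = S_n Ã. Let B̃ be an (ℓn)×k^∨ matrix whose columns form a basis of ker(Ãᵀ). Then there exists Φ^∨ ∈ End(ℂ^{k^∨}) such that S_nᵀ B̃ = B̃ Φ^∨, and this Φ^∨ satisfies (Φ^∨)^ℓ = 0. -/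
/-!
Since `S_n Ã = Ã Φ`, transposing gives `Ãᵀ (S_nᵀ B̃) = Φᵀ Ãᵀ B̃ = 0`, so the columns of `S_nᵀ B̃`
lie in `ker Ãᵀ`. By rank–nullity this kernel has dimension `nℓ − k = rank B̃`, hence equals the
column span of `B̃`, which yields `Φ^∨`. Iterating, `B̃ (Φ^∨)^ℓ = (S_nᵀ)^ℓ B̃ = 0`, and `B̃` has
full column rank, so `(Φ^∨)^ℓ = 0`.
-/

open Matrix

namespace Matrix

theorem pow_mul_eq_mul_pow_of_mul_eq_mul {R m s : Type*} [Semiring R] [Fintype m] [Fintype s]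
    [DecidableEq m] [DecidableEq s] {T : Matrix m m R} {B : Matrix m s R} {Ψ : Matrix s s R}
    (hTB : T * B = B * Ψ) (p : ℕ) : T ^ p * B = B * Ψ ^ p := by
  induction p with
  | zero => simp
  | succ p ih => rw [pow_succ', Matrix.mul_assoc, ih, ← Matrix.mul_assoc, hTB, Matrix.mul_assoc,
      ← pow_succ']

theorem exists_mul_eq_of_range_eq_ker {R l m s t : Type*} [CommSemiring R] [Fintype m]
    [Fintype s] {A : Matrix l m R} {B : Matrix m s R} {C : Matrix m t R}
    (hBA : LinearMap.range B.mulVecLin = LinearMap.ker A.mulVecLin) (hAC : A * C = 0) :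
    ∃ X : Matrix s t R, C = B * X := by
  have hcol : ∀ j, ∃ x, B *ᵥ x = C.col j := fun j => by
    have : C.col j ∈ LinearMap.ker A.mulVecLin := by
      ext i
      simpa [mulVec, dotProduct, mul_apply] using congrFun₂ hAC i j
    simpa [← hBA] using this
  choose x hx using hcol
  exact ⟨of fun i j => x j i, ext_col fun j => (hx j).symm⟩

section Field

variable {K : Type*} [Field K] {l m s : Type*} [Fintype s]

theorem range_mulVecLin_eq_ker_of_mul_eq_zero [Fintype m] {A : Matrix l m K} {B : Matrix m s K}
    (hAB : A * B = 0) (hB : B.rank = Fintype.card m - A.rank) :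
    LinearMap.range B.mulVecLin = LinearMap.ker A.mulVecLin := by
  have hle : LinearMap.range B.mulVecLin ≤ LinearMap.ker A.mulVecLin := by
    rw [LinearMap.range_le_ker_iff, ← mulVecLin_mul, hAB, mulVecLin_zero]
  refine Submodule.eq_of_le_of_finrank_le hle ?_
  have hnullity := LinearMap.finrank_range_add_finrank_ker A.mulVecLin
  rw [Module.finrank_fintype_fun_eq_card] at hnullity
  change _ ≤ B.rank
  rw [hB, rank]
  omega

theorem mulVec_injective_of_rank_eq_card {B : Matrix m s K} (hB : B.rank = Fintype.card s) :
    Function.Injective B.mulVec := by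
  have hnullity := LinearMap.finrank_range_add_finrank_ker B.mulVecLin
  rw [Module.finrank_fintype_fun_eq_card] at hnullity
  change Function.Injective B.mulVecLin
  rw [← LinearMap.ker_eq_bot, ← Submodule.finrank_eq_zero (R := K)]
  rw [rank] at hB
  omega

theorem pow_eq_zero_of_mul_eq_mul [Fintype m] [DecidableEq m] [DecidableEq s] {T : Matrix m m K}
    {B : Matrix m s K} {Ψ : Matrix s s K} (hB : B.rank = Fintype.card s) (hTB : T * B = B * Ψ)
    {p : ℕ} (hT : T ^ p = 0) : Ψ ^ p = 0 := by
  have hBΨ : B * Ψ ^ p = B * (0 : Matrix s s K) := by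
    rw [← pow_mul_eq_mul_pow_of_mul_eq_mul hTB, hT, Matrix.zero_mul, Matrix.mul_zero]
  exact ext_col fun j => mulVec_injective_of_rank_eq_card hB congr(($hBΨ).col j)

end Field

section BlockShift

variable (R : Type*) [Semiring R] (ℓ : ℕ) (ι : Type*) [Fintype ι] [DecidableEq ι]

-- Row block `m` of `blockShift R ℓ ι * X` is row block `m + 1` of `X`.
def blockShift : Matrix (Fin ℓ × ι) (Fin ℓ × ι) R :=
  of fun i j => if (j.1 : ℕ) = i.1 + 1 ∧ i.2 = j.2 then 1 else 0

variable {R ℓ ι} {κ : Type*} [Fintype κ] [DecidableEq κ]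

def blockStack (ℓ : ℕ) (Q : Matrix ι κ R) (Φ : Matrix κ κ R) : Matrix (Fin ℓ × ι) κ R :=
  of fun i b => (Q * Φ ^ (i.1 : ℕ)) i.2 b

theorem blockShift_pow_apply_eq_zero (p : ℕ) {i j : Fin ℓ × ι} (h : (j.1 : ℕ) < i.1 + p) :
    (blockShift R ℓ ι ^ p) i j = 0 := by
  induction p generalizing i with
  | zero => exact one_apply_ne fun hij => by rw [← hij] at h; omega
  | succ p ih =>
    rw [pow_succ', mul_apply]
    refine Finset.sum_eq_zero fun c _ => ?_
    by_cases hc : (c.1 : ℕ) = i.1 + 1 ∧ i.2 = c.2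
    · rw [ih (by omega), mul_zero]
    · simp [blockShift, hc]

theorem blockShift_pow_eq_zero : blockShift R ℓ ι ^ ℓ = 0 :=
  ext fun _ j => blockShift_pow_apply_eq_zero ℓ (by omega)

theorem blockShift_mul_blockStack {Q : Matrix ι κ R} {Φ : Matrix κ κ R} (hΦ : Φ ^ ℓ = 0) :
    blockShift R ℓ ι * blockStack ℓ Q Φ = blockStack ℓ Q Φ * Φ := by
  ext ⟨m, a⟩ b
  have hrhs : (blockStack ℓ Q Φ * Φ) (m, a) b = (Q * Φ ^ ((m : ℕ) + 1)) a b := by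
    rw [pow_succ, ← Matrix.mul_assoc]; rfl
  rw [hrhs, mul_apply]
  rcases (Nat.succ_le_of_lt m.isLt).lt_or_eq with h | h
  · rw [Fintype.sum_eq_single (⟨m + 1, h⟩, a)]
    · simp [blockShift, blockStack]
    · rintro ⟨x, y⟩ hxy
      have : ¬ ((x : ℕ) = m + 1 ∧ a = y) := fun ⟨hx, hy⟩ => hxy (by ext <;> simp [hx, hy])
      simp [blockShift, this]
  · have hx : ∀ x : Fin ℓ, (x : ℕ) ≠ m + 1 := fun x => by have := x.isLt; omega
    rw [show (m : ℕ) + 1 = ℓ from h, hΦ]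
    simp [blockShift, hx]

end BlockShift

end Matrix

theorem stmt_18_general (ℓ n k : ℕ)
    (Φ : Matrix (Fin k) (Fin k) ℂ) (hΦ : Φ ^ ℓ = 0)
    (Qt : Matrix (Fin n) (Fin k) ℂ)
    -- the stacked matrix Ã with row blocks Q̃, Q̃Φ, …, Q̃Φ^{ℓ−1}
    (Atilde : Matrix (Fin ℓ × Fin n) (Fin k) ℂ)
    (hA : ∀ (m : Fin ℓ) (a : Fin n) (b : Fin k),
      Atilde (m, a) b = (Qt * Φ ^ (m : ℕ)) a b)
    (hArank : Atilde.rank = k)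
    -- the block upshift operator S_n
    (Sn : Matrix (Fin ℓ × Fin n) (Fin ℓ × Fin n) ℂ)
    (hSn : ∀ (m m' : Fin ℓ) (a a' : Fin n),
      Sn (m, a) (m', a') = if (m' : ℕ) = (m : ℕ) + 1 ∧ a = a' then 1 else 0)
    -- B̃, whose columns form a basis of ker Ãᵀ
    (Btilde : Matrix (Fin ℓ × Fin n) (Fin (n * ℓ - k)) ℂ)
    (hBker : Atildeᵀ * Btilde = 0)
    (hBrank : Btilde.rank = n * ℓ - k) :
    (∃ Φv : Matrix (Fin (n * ℓ - k)) (Fin (n * ℓ - k)) ℂ,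
        Snᵀ * Btilde = Btilde * Φv) ∧
    (∀ Φv : Matrix (Fin (n * ℓ - k)) (Fin (n * ℓ - k)) ℂ,
        Snᵀ * Btilde = Btilde * Φv → Φv ^ ℓ = 0) := by
  obtain rfl : Sn = blockShift ℂ ℓ (Fin n) := ext fun ⟨m, a⟩ ⟨m', a'⟩ => hSn m m' a a'
  obtain rfl : Atilde = blockStack ℓ Qt Φ := ext fun ⟨m, a⟩ b => hA m a b
  have hrange : LinearMap.range Btilde.mulVecLin = LinearMap.ker (blockStack ℓ Qt Φ)ᵀ.mulVecLin :=
    range_mulVecLin_eq_ker_of_mul_eq_zero hBker <| by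
      rw [hBrank, rank_transpose, hArank, Fintype.card_prod, Fintype.card_fin, Fintype.card_fin,
        Nat.mul_comm]
  refine ⟨exists_mul_eq_of_range_eq_ker hrange ?_, fun Φv hΦv => ?_⟩
  · rw [← Matrix.mul_assoc, ← transpose_mul, blockShift_mul_blockStack hΦ, transpose_mul,
      Matrix.mul_assoc, hBker, Matrix.mul_zero]
  · refine pow_eq_zero_of_mul_eq_mul (by rw [hBrank, Fintype.card_fin]) hΦv ?_
    rw [← transpose_pow, blockShift_pow_eq_zero, transpose_zero]

theorem stmt_18 (ℓ n k : ℕ) (hℓ : 1 ≤ ℓ) (hn : 1 ≤ n) (hk : k ≤ n * ℓ)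
    (Φ : Matrix (Fin k) (Fin k) ℂ) (hΦ : Φ ^ ℓ = 0)
    (Qt : Matrix (Fin n) (Fin k) ℂ)
    -- the stacked matrix Ã with row blocks Q̃, Q̃Φ, …, Q̃Φ^{ℓ−1}
    (Atilde : Matrix (Fin ℓ × Fin n) (Fin k) ℂ)
    (hA : ∀ (m : Fin ℓ) (a : Fin n) (b : Fin k),
      Atilde (m, a) b = (Qt * Φ ^ (m : ℕ)) a b)
    (hArank : Atilde.rank = k)
    -- the block upshift operator S_n
    (Sn : Matrix (Fin ℓ × Fin n) (Fin ℓ × Fin n) ℂ)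
    (hSn : ∀ (m m' : Fin ℓ) (a a' : Fin n),
      Sn (m, a) (m', a') = if (m' : ℕ) = (m : ℕ) + 1 ∧ a = a' then 1 else 0)
    -- B̃, whose columns form a basis of ker Ãᵀ
    (Btilde : Matrix (Fin ℓ × Fin n) (Fin (n * ℓ - k)) ℂ)
    (hBker : Atildeᵀ * Btilde = 0)
    (hBrank : Btilde.rank = n * ℓ - k) :
    (∃ Φv : Matrix (Fin (n * ℓ - k)) (Fin (n * ℓ - k)) ℂ,
        Snᵀ * Btilde = Btilde * Φv) ∧
    (∀ Φv : Matrix (Fin (n * ℓ - k)) (Fin (n * ℓ - k)) ℂ,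
        Snᵀ * Btilde = Btilde * Φv → Φv ^ ℓ = 0) :=
  stmt_18_general ℓ n k Φ hΦ Qt Atilde hA hArank Sn hSn Btilde hBker hBrank
end
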